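/- arXiv:2511.05806 — 5 statements merged into one kernel-verified Lean document; each statement's English description precedes it below -/
import Mathlib

section
/- Let S be a numerical semigroup with gap set G(S), let t be a nonzero element of S, and let f be any function from the nonnegative integers to the integers (an arbitrary arithmetic function). Then the sum over all gaps g in G(S) of (f(g+t) − f(g)) equals the sum of f(a) over all a in the Apéry set Ap(S;t) minus the sum of f(k) for k = 0, 1, …, t−1. -/
/-!
Shifting the gaps by `t` and adjoining `{0, …, t - 1}` gives the same set as adjoining the gaps
to the Apéry set: below `t` every integer is either a gap or in `Ap(S;t)`, and above `t` an integer
`n` lies in `Ap(S;t) ∪ G(S)` exactly when `n - t` is a gap, because `t ∈ S` makes `S + t ⊆ S`.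
Both unions are disjoint, so summing `f` over them gives
`∑_{g ∈ G} f(g + t) + ∑_{k < t} f(k) = ∑_{a ∈ Ap} f(a) + ∑_{g ∈ G} f(g)`.
-/

/-- `S` is a numerical semigroup: an additive submonoid of `ℕ` with finite complement. -/
def IsNumericalSemigroup (S : Set ℕ) : Prop :=
  0 ∈ S ∧ (∀ a ∈ S, ∀ b ∈ S, a + b ∈ S) ∧ Sᶜ.Finite

/-- The Apéry set of `S` relative to `t`: the elements `s ∈ S` such that `s - t ∉ S`
(as integers, i.e. there is no `u ∈ S` with `s = u + t`). -/
def aperySet (S : Set ℕ) (t : ℕ) : Set ℕ :=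
  {s ∈ S | ¬ ∃ u ∈ S, s = u + t}

theorem disjoint_image_add_Iio (A : Set ℕ) (t : ℕ) :
    Disjoint ((· + t) '' A) (Set.Iio t) := by
  rw [Set.disjoint_left]
  rintro _ ⟨g, -, rfl⟩
  simp

theorem disjoint_aperySet_compl (S : Set ℕ) (t : ℕ) : Disjoint (aperySet S t) Sᶜ :=
  Set.disjoint_compl_right_iff_subset.mpr (Set.sep_subset S _)

theorem image_add_compl_union_Iio {S : Set ℕ} (hadd : ∀ a ∈ S, ∀ b ∈ S, a + b ∈ S)
    {t : ℕ} (ht : t ∈ S) :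
    (· + t) '' Sᶜ ∪ Set.Iio t = aperySet S t ∪ Sᶜ := by
  ext n
  simp only [aperySet, Set.mem_union, Set.mem_compl_iff, Set.mem_Iio, Set.mem_ofPred_eq]
  by_cases hnt : n < t
  · have hnot : ¬ ∃ u ∈ S, n = u + t := by rintro ⟨u, -, rfl⟩; omega
    have himage : n ∉ (· + t) '' Sᶜ := fun h =>
      Set.disjoint_left.mp (disjoint_image_add_Iio _ t) h hnt
    tauto
  obtain ⟨m, rfl⟩ : ∃ m, n = m + t := ⟨n - t, by omega⟩
  have hshift : m ∈ S → m + t ∈ S := fun hm => hadd m hm t ht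
  have hrep : (∃ u ∈ S, m + t = u + t) ↔ m ∈ S := by simp
  rw [(add_left_injective t).mem_set_image, hrep, Set.mem_compl_iff]
  tauto

theorem aperySet_finite {S : Set ℕ} (hadd : ∀ a ∈ S, ∀ b ∈ S, a + b ∈ S) (hfin : Sᶜ.Finite)
    {t : ℕ} (ht : t ∈ S) : (aperySet S t).Finite :=
  ((hfin.image _).union (Set.finite_Iio t)).subset <|
    (image_add_compl_union_Iio hadd ht).symm ▸ Set.subset_union_left

theorem gap_sum_identity_general (S : Set ℕ) (hS : IsNumericalSemigroup S)
    (t : ℕ) (ht : t ∈ S) (f : ℕ → ℤ) :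
    (∑ᶠ g ∈ Sᶜ, (f (g + t) - f g))
      = (∑ᶠ a ∈ aperySet S t, f a) - ∑ k ∈ Finset.range t, f k := by
  obtain ⟨-, hadd, hfin⟩ := hS
  have hsplit : ∑ᶠ g ∈ Sᶜ, f (g + t) + ∑ k ∈ Finset.range t, f k
      = ∑ᶠ a ∈ aperySet S t, f a + ∑ᶠ g ∈ Sᶜ, f g := by
    rw [← finsum_mem_coe_finset, Finset.coe_range,
      ← finsum_mem_image (f := f) (add_left_injective t).injOn,
      ← finsum_mem_union (disjoint_image_add_Iio _ t) (hfin.image _) (Set.finite_Iio t),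
      ← finsum_mem_union (disjoint_aperySet_compl S t) (aperySet_finite hadd hfin ht) hfin,
      image_add_compl_union_Iio hadd ht]
  rw [finsum_mem_sub_distrib (fun g => f (g + t)) f hfin]
  linarith

/-- For `S` a numerical semigroup with gap set `Sᶜ`, `t` a nonzero element of `S`, and
`f` an arbitrary arithmetic function,
`∑_{g ∈ G(S)} (f(g+t) - f(g)) = ∑_{a ∈ Ap(S;t)} f(a) - ∑_{k=0}^{t-1} f(k)`. -/
theorem gap_sum_identity (S : Set ℕ) (hS : IsNumericalSemigroup S)
    (t : ℕ) (ht : t ∈ S) (ht0 : t ≠ 0) (f : ℕ → ℤ) :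
    (∑ᶠ g ∈ Sᶜ, (f (g + t) - f g))
      = (∑ᶠ a ∈ aperySet S t, f a) - ∑ k ∈ Finset.range t, f k :=
  gap_sum_identity_general S hS t ht f
end

section
/- Let S be a numerical semigroup with gap set G(S), and let t be a nonzero odd element of S with Apéry set 𝒜 = Ap(S;t). Then O(G(S)) − E(G(S)) = −1/2 + (E(𝒜) − O(𝒜))/2; equivalently, 2(O(G(S)) − E(G(S))) = −1 + E(𝒜) − O(𝒜). -/
/-- `O(T)`: the number of odd elements of `T`. -/
noncomputable def countOdd (T : Set ℕ) : ℕ := {x ∈ T | Odd x}.ncard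

/-- `E(T)`: the number of even elements of `T`. -/
noncomputable def countEven (T : Set ℕ) : ℕ := {x ∈ T | Even x}.ncard

open Finset

private lemma sum_neg_one_pow (F : Finset ℕ) :
    ∑ x ∈ F, (-1:ℤ)^x
      = ((F.filter (fun x => Even x)).card : ℤ) - ((F.filter (fun x => Odd x)).card : ℤ) := by
  classical
  rw [← Finset.sum_filter_add_sum_filter_not F (fun x => Even x)]
  have h1 : ∑ x ∈ F.filter (fun x => Even x), (-1:ℤ)^x
      = ((F.filter (fun x => Even x)).card : ℤ) := by
    rw [Finset.sum_congr rfl (fun x hx => (Finset.mem_filter.mp hx).2.neg_one_pow),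
      Finset.sum_const, nsmul_eq_mul, mul_one]
  have heq : F.filter (fun x => ¬ Even x) = F.filter (fun x => Odd x) :=
    Finset.filter_congr (fun x _ => Nat.not_even_iff_odd)
  have h2 : ∑ x ∈ F.filter (fun x => ¬ Even x), (-1:ℤ)^x
      = -((F.filter (fun x => Odd x)).card : ℤ) := by
    rw [heq, Finset.sum_congr rfl (fun x hx => (Finset.mem_filter.mp hx).2.neg_one_pow),
      Finset.sum_const, nsmul_eq_mul, mul_neg, mul_one]
  rw [h1, h2]
  ring

private lemma sum_indicator_eq (T : Set ℕ) [DecidablePred (· ∈ T)] (hT : T.Finite) (K : ℕ)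
    (hbound : ∀ x ∈ T, x < K) :
    ∑ n ∈ Finset.range K, (-1:ℤ)^n * (if n ∈ T then 1 else 0)
      = ∑ x ∈ hT.toFinset, (-1:ℤ)^x := by
  have h : ∀ n ∈ Finset.range K,
      (-1:ℤ)^n * (if n ∈ T then 1 else 0) = if n ∈ T then (-1:ℤ)^n else 0 := by
    intro n _; split <;> ring
  rw [Finset.sum_congr rfl h, ← Finset.sum_filter]
  congr 1
  ext x
  simp only [Finset.mem_filter, Finset.mem_range, Set.Finite.mem_toFinset]
  exact ⟨fun h => h.2, fun h => ⟨hbound x h, h⟩⟩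

private lemma ncard_filter (T : Set ℕ) (hT : T.Finite) (p : ℕ → Prop) [DecidablePred p] :
    {x ∈ T | p x}.ncard = (hT.toFinset.filter p).card := by
  rw [← Set.ncard_coe_finset]
  congr 1
  ext x
  simp [Set.Finite.mem_toFinset]

/-- For `S` a numerical semigroup and `t` a nonzero odd element of `S` with Apéry set
`𝒜 = Ap(S;t)`, we have `O(G(S)) - E(G(S)) = -1/2 + (E(𝒜) - O(𝒜))/2`, i.e.
`2(O(G(S)) - E(G(S))) = -1 + E(𝒜) - O(𝒜)`. -/
theorem parity_difference_odd (S : Set ℕ) (hS : IsNumericalSemigroup S)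
    (t : ℕ) (ht : t ∈ S) (ht0 : t ≠ 0) (htodd : Odd t) :
    2 * ((countOdd Sᶜ : ℤ) - (countEven Sᶜ : ℤ))
      = -1 + ((countEven (aperySet S t) : ℤ) - (countOdd (aperySet S t) : ℤ)) := by
  classical
  obtain ⟨h0, hadd, hG⟩ := hS
  -- a bound beyond which everything is in S
  set B : ℕ := hG.toFinset.sup (· + 1) with hBdef
  have hBmem : ∀ n, B ≤ n → n ∈ S := by
    intro n hn
    by_contra hns
    have hmem : n ∈ hG.toFinset := hG.mem_toFinset.mpr hns
    have h2 : n + 1 ≤ B := Finset.le_sup (f := fun x => x + 1) hmem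
    omega
  have hGlt : ∀ x ∈ Sᶜ, x < B := by
    intro x hx
    have hmem : x ∈ hG.toFinset := hG.mem_toFinset.mpr hx
    have h2 : x + 1 ≤ B := Finset.le_sup (f := fun x => x + 1) hmem
    omega
  -- the Apéry set is finite and bounded
  have hAlt : ∀ x ∈ aperySet S t, x < B + t := by
    intro w hw
    obtain ⟨hwS, hna⟩ := hw
    by_contra h
    push_neg at h
    exact hna ⟨w - t, hBmem _ (by omega), by omega⟩
  have hA : (aperySet S t).Finite :=
    (Set.finite_Iio (B + t)).subset (fun x hx => hAlt x hx)
  -- abbreviations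
  set K : ℕ := 2 * (B + t) with hKdef
  set M : ℕ := 2 * (B + t) + t with hMdef
  have htM : t ≤ M := by omega
  have hMt : M - t = K := by omega
  -- indicator identity for the Apéry set
  have key : ∀ n, (if n ∈ aperySet S t then (1:ℤ) else 0)
      = (if n ∈ S then 1 else 0) - (if t ≤ n ∧ n - t ∈ S then 1 else 0) := by
    intro n
    have hiff : (∃ u ∈ S, n = u + t) ↔ (t ≤ n ∧ n - t ∈ S) := by
      constructor
      · rintro ⟨u, hu, rfl⟩
        exact ⟨by omega, by simpa using hu⟩
      · rintro ⟨h1, h2⟩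
        exact ⟨n - t, h2, by omega⟩
    have himp : t ≤ n ∧ n - t ∈ S → n ∈ S := by
      rintro ⟨h1, h2⟩
      have := hadd _ h2 _ ht
      rwa [Nat.sub_add_cancel h1] at this
    have hmemA : n ∈ aperySet S t ↔ n ∈ S ∧ ¬ (t ≤ n ∧ n - t ∈ S) := by
      simp only [aperySet, Set.mem_setOf_eq, hiff]
    by_cases h1 : n ∈ S
    · by_cases h2 : t ≤ n ∧ n - t ∈ S
      · have : n ∉ aperySet S t := fun h => (hmemA.mp h).2 h2
        simp [this, h1, h2]
      · have : n ∈ aperySet S t := hmemA.mpr ⟨h1, h2⟩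
        simp [this, h1, h2]
    · have hna : n ∉ aperySet S t := fun h => h1 (hmemA.mp h).1
      have h2 : ¬(t ≤ n ∧ n - t ∈ S) := fun h => h1 (himp h)
      simp [hna, h1, h2]
  -- sums restricted to ranges
  have sA : ∑ n ∈ Finset.range M, (-1:ℤ)^n * (if n ∈ aperySet S t then 1 else 0)
      = ∑ x ∈ hA.toFinset, (-1:ℤ)^x :=
    sum_indicator_eq _ hA M (fun x hx => lt_of_lt_of_le (hAlt x hx) (by omega))
  have FGen : ∀ K' : ℕ, B ≤ K' →
      ∑ n ∈ Finset.range K', (-1:ℤ)^n * (if n ∈ S then 1 else 0)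
        = (if Even K' then 0 else 1) - ∑ x ∈ hG.toFinset, (-1:ℤ)^x := by
    intro K' hK'
    have hsplit : ∀ n ∈ Finset.range K', (-1:ℤ)^n * (if n ∈ S then 1 else 0)
        = (-1:ℤ)^n - (-1:ℤ)^n * (if n ∈ Sᶜ then 1 else 0) := by
      intro n _
      by_cases h : n ∈ S <;> simp [h] <;> ring
    rw [Finset.sum_congr rfl hsplit, Finset.sum_sub_distrib,
      sum_indicator_eq Sᶜ hG K' (fun x hx => lt_of_lt_of_le (hGlt x hx) hK'),
      neg_one_geom_sum]
  -- the translated sum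
  have sTrans : ∑ n ∈ Finset.range M, (-1:ℤ)^n * (if t ≤ n ∧ n - t ∈ S then 1 else 0)
      = - ∑ n ∈ Finset.range K, (-1:ℤ)^n * (if n ∈ S then 1 else 0) := by
    have hlow : ∑ n ∈ Finset.Ico 0 t, (-1:ℤ)^n * (if t ≤ n ∧ n - t ∈ S then 1 else 0) = 0 := by
      apply Finset.sum_eq_zero
      intro n hn
      simp only [Finset.mem_Ico] at hn
      have : ¬ (t ≤ n ∧ n - t ∈ S) := fun h => by omega
      simp [this]
    have h1 : ∑ n ∈ Finset.range M, (-1:ℤ)^n * (if t ≤ n ∧ n - t ∈ S then 1 else 0)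
        = ∑ n ∈ Finset.Ico t M, (-1:ℤ)^n * (if t ≤ n ∧ n - t ∈ S then 1 else 0) := by
      rw [Finset.range_eq_Ico, ← Finset.sum_Ico_consecutive _ (Nat.zero_le t) htM, hlow,
        zero_add]
    rw [h1, Finset.sum_Ico_eq_sum_range, hMt, ← Finset.sum_neg_distrib]
    apply Finset.sum_congr rfl
    intro i _
    have hc : t ≤ t + i ∧ t + i - t ∈ S ↔ i ∈ S := by
      constructor
      · rintro ⟨_, h⟩
        simpa using h
      · intro h
        exact ⟨by omega, by simpa using h⟩
    have hpow : (-1:ℤ)^(t + i) = -(-1:ℤ)^i := by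
      rw [pow_add, htodd.neg_one_pow]
      ring
    by_cases h : i ∈ S
    · simp [hc.mpr h, h, hpow]
    · have : ¬ (t ≤ t + i ∧ t + i - t ∈ S) := fun hh => h (hc.mp hh)
      simp [this, h]
  have hModd : ¬ Even M := by
    obtain ⟨k, hk⟩ := htodd
    rw [Nat.even_iff]
    omega
  have hKeven : Even K := ⟨B + t, by omega⟩
  -- combine everything
  have step : ∑ n ∈ Finset.range M, (-1:ℤ)^n * (if n ∈ aperySet S t then 1 else 0)
      = (∑ n ∈ Finset.range M, (-1:ℤ)^n * (if n ∈ S then 1 else 0))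
        - ∑ n ∈ Finset.range M, (-1:ℤ)^n * (if t ≤ n ∧ n - t ∈ S then 1 else 0) := by
    rw [← Finset.sum_sub_distrib]
    exact Finset.sum_congr rfl (fun n _ => by rw [key n]; ring)
  have hsum : ∑ x ∈ hA.toFinset, (-1:ℤ)^x
      = 1 - 2 * ∑ x ∈ hG.toFinset, (-1:ℤ)^x := by
    rw [← sA, step, sTrans, FGen M (by omega), FGen K (by omega),
      if_neg hModd, if_pos hKeven]
    ring
  have hEOA : (countEven (aperySet S t) : ℤ) - (countOdd (aperySet S t) : ℤ)
      = ∑ x ∈ hA.toFinset, (-1:ℤ)^x := by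
    rw [sum_neg_one_pow, countEven, countOdd, ncard_filter _ hA, ncard_filter _ hA]
  have hEOG : (countEven Sᶜ : ℤ) - (countOdd Sᶜ : ℤ)
      = ∑ x ∈ hG.toFinset, (-1:ℤ)^x := by
    rw [sum_neg_one_pow, countEven, countOdd, ncard_filter _ hG, ncard_filter _ hG]
  linarith [hsum, hEOA, hEOG]
end

section
/- Let S be a numerical semigroup with gap set G(S), and let t be a nonzero even element of S with Apéry set 𝒜 = Ap(S;t). Then O(G(S)) − E(G(S)) = −1/2 + (σ_O(𝒜) − σ_E(𝒜))/t; equivalently, 2t(O(G(S)) − E(G(S))) = −t + 2(σ_O(𝒜) − σ_E(𝒜)). -/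
/-- `σ_O(T)`: the sum of the odd elements of `T`. -/
noncomputable def sumOdd (T : Set ℕ) : ℕ := ∑ᶠ x ∈ {y ∈ T | Odd y}, x

/-- `σ_E(T)`: the sum of the even elements of `T`. -/
noncomputable def sumEven (T : Set ℕ) : ℕ := ∑ᶠ x ∈ {y ∈ T | Even y}, x

/-!
Let `w i = aperyElem S t i` be the least element of `S` congruent to `i` modulo `t`. The Apéry
set is `{w i | i < t}`, and the gaps congruent to `i` are `i, i + t, …, w i - t`, so there are
`w i / t` of them. Hence, summing over any union of residue classes, `σ(𝒜) = Σ i + t · #gaps`.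
When `t` is even, parity is a property of the residue class, and over the residues `i < t` the
odd ones exceed the even ones by `t / 2` in total.
-/

open Finset

noncomputable def aperyElem (S : Set ℕ) (t i : ℕ) : ℕ := sInf {x ∈ S | x % t = i}

theorem aperyElem_le {S : Set ℕ} {t x : ℕ} (hx : x ∈ S) : aperyElem S t (x % t) ≤ x :=
  Nat.sInf_le ⟨hx, rfl⟩

theorem Nat.odd_iff_odd_mod_of_even {t : ℕ} (ht : Even t) (x : ℕ) : Odd x ↔ Odd (x % t) := by
  rw [Nat.odd_iff, Nat.odd_iff, Nat.mod_mod_of_dvd x ht.two_dvd]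

theorem Nat.even_iff_even_mod_of_even {t : ℕ} (ht : Even t) (x : ℕ) :
    Even x ↔ Even (x % t) := by
  rw [Nat.even_iff, Nat.even_iff, Nat.mod_mod_of_dvd x ht.two_dvd]

theorem two_mul_sum_range_filter_odd {t : ℕ} (ht : Even t) :
    2 * ∑ i ∈ (range t).filter Odd, i = 2 * ∑ i ∈ (range t).filter Even, i + t := by
  obtain ⟨m, rfl⟩ := ht
  simp only [sum_filter]
  induction m with
  | zero => simp
  | succ m ih =>
    have hodd : Odd (m + m + 1) := ⟨m, by ring⟩
    have heven : Even (m + m) := ⟨m, rfl⟩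
    rw [show m + 1 + (m + 1) = m + m + 1 + 1 by ring, sum_range_succ, sum_range_succ,
      sum_range_succ, sum_range_succ, if_pos hodd, if_neg (Nat.not_even_iff_odd.mpr hodd),
      if_pos heven, if_neg (Nat.not_odd_iff_even.mpr heven)]
    omega

namespace IsNumericalSemigroup

variable {S : Set ℕ} {t : ℕ}

theorem add_mul_mem (hS : IsNumericalSemigroup S) (ht : t ∈ S) {a : ℕ} (ha : a ∈ S) (k : ℕ) :
    a + k * t ∈ S := by
  induction k with
  | zero => simpa using ha
  | succ k ih => simpa [add_mul, ← add_assoc] using hS.2.1 _ ih _ ht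

theorem exists_mem_mod_eq (hS : IsNumericalSemigroup S) {i : ℕ} (hi : i < t) :
    ∃ x ∈ S, x % t = i := by
  obtain ⟨N, hN⟩ := hS.2.2.bddAbove
  refine ⟨i + (N + 1) * t, ?_, by rw [Nat.add_mul_mod_self_right, Nat.mod_eq_of_lt hi]⟩
  by_contra h
  have hle : i + (N + 1) * t ≤ N := hN h
  have : N + 1 ≤ (N + 1) * t := Nat.le_mul_of_pos_right _ (by omega)
  omega

theorem aperyElem_mem (hS : IsNumericalSemigroup S) {i : ℕ} (hi : i < t) :
    aperyElem S t i ∈ S :=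
  (Nat.sInf_mem (hS.exists_mem_mod_eq hi)).1

theorem aperyElem_mod (hS : IsNumericalSemigroup S) {i : ℕ} (hi : i < t) :
    aperyElem S t i % t = i :=
  (Nat.sInf_mem (hS.exists_mem_mod_eq hi)).2

theorem aperyElem_eq_add_mul_div (hS : IsNumericalSemigroup S) {i : ℕ} (hi : i < t) :
    aperyElem S t i = i + t * (aperyElem S t i / t) := by
  conv_lhs => rw [← Nat.mod_add_div (aperyElem S t i) t, hS.aperyElem_mod hi]

theorem exists_eq_aperyElem_add_mul (hS : IsNumericalSemigroup S) (htpos : 0 < t) {x : ℕ}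
    (hx : aperyElem S t (x % t) ≤ x) : ∃ k, x = aperyElem S t (x % t) + k * t := by
  have hmod := hS.aperyElem_mod (x.mod_lt htpos)
  obtain ⟨k, hk⟩ := Nat.dvd_of_mod_eq_zero (Nat.sub_mod_eq_zero_of_mod_eq hmod.symm)
  exact ⟨k, by rw [mul_comm] at hk; omega⟩

theorem mem_iff_aperyElem_le (hS : IsNumericalSemigroup S) (ht : t ∈ S) (htpos : 0 < t)
    {x : ℕ} : x ∈ S ↔ aperyElem S t (x % t) ≤ x := by
  refine ⟨aperyElem_le, fun hx => ?_⟩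
  obtain ⟨k, hk⟩ := hS.exists_eq_aperyElem_add_mul htpos hx
  exact hk ▸ hS.add_mul_mem ht (hS.aperyElem_mem (x.mod_lt htpos)) k

theorem mem_aperySet_iff (hS : IsNumericalSemigroup S) (ht : t ∈ S) (htpos : 0 < t) {x : ℕ} :
    x ∈ aperySet S t ↔ x = aperyElem S t (x % t) := by
  refine ⟨fun ⟨hx, hmin⟩ => ?_, fun hx => ⟨?_, ?_⟩⟩
  · obtain ⟨_ | k, hk⟩ := hS.exists_eq_aperyElem_add_mul htpos (aperyElem_le hx)
    · simpa using hk
    · rw [add_mul, one_mul, ← add_assoc] at hk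
      have hsub : x - t = aperyElem S t (x % t) + k * t := by omega
      exact absurd ⟨x - t, hsub ▸ hS.add_mul_mem ht (hS.aperyElem_mem (x.mod_lt htpos)) k,
        by omega⟩ hmin
  · exact (hS.mem_iff_aperyElem_le ht htpos).mpr hx.ge
  · rintro ⟨u, hu, rfl⟩
    have hle := aperyElem_le (t := t) hu
    rw [Nat.add_mod_right] at hx
    omega

theorem ncard_compl_mod_eq (hS : IsNumericalSemigroup S) (ht : t ∈ S) {i : ℕ} (hi : i < t) :
    {x ∈ Sᶜ | x % t = i}.ncard = aperyElem S t i / t := by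
  have htpos : 0 < t := by omega
  have hw := hS.aperyElem_eq_add_mul_div hi
  have hset : {x ∈ Sᶜ | x % t = i}
      = ↑((range (aperyElem S t i / t)).image (fun k => i + k * t)) := by
    ext x
    simp only [Set.mem_ofPred_eq, Set.mem_compl_iff, coe_image, coe_range, Set.mem_image,
      Set.mem_Iio]
    constructor
    · rintro ⟨hx, rfl⟩
      rw [hS.mem_iff_aperyElem_le ht htpos, not_le] at hx
      have hdiv := Nat.mod_add_div x t
      refine ⟨x / t, Nat.lt_of_mul_lt_mul_left (a := t) (by linarith), by linarith⟩
    · rintro ⟨k, hk, rfl⟩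
      have hmod : (i + k * t) % t = i := by rw [Nat.add_mul_mod_self_right, Nat.mod_eq_of_lt hi]
      refine ⟨?_, hmod⟩
      rw [hS.mem_iff_aperyElem_le ht htpos, hmod, not_le]
      have := (Nat.mul_lt_mul_right htpos).mpr hk
      linarith
  rw [hset, Set.ncard_coe_finset, card_image_of_injective, card_range]
  intro a b hab
  exact Nat.eq_of_mul_eq_mul_right htpos (by simpa using hab)

variable {P : ℕ → Prop} [DecidablePred P]

theorem ncard_compl_filter (hS : IsNumericalSemigroup S) (ht : t ∈ S) (htpos : 0 < t)
    (hP : ∀ x, P x ↔ P (x % t)) :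
    {x ∈ Sᶜ | P x}.ncard = ∑ i ∈ (range t).filter P, aperyElem S t i / t := by
  have hset : {x ∈ Sᶜ | P x} = ↑(hS.2.2.toFinset.filter P) := by
    ext x; simp
  rw [hset, Set.ncard_coe_finset, card_eq_sum_card_fiberwise (f := (· % t))]
  · refine sum_congr rfl fun i hi => ?_
    rw [mem_filter, mem_range] at hi
    rw [← hS.ncard_compl_mod_eq ht hi.1, ← Set.ncard_coe_finset]
    congr 1
    ext x
    simp only [coe_filter, mem_filter, Set.Finite.mem_toFinset, Set.mem_ofPred_eq]
    constructor
    · exact fun ⟨⟨hx, _⟩, hxi⟩ => ⟨hx, hxi⟩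
    · rintro ⟨hx, rfl⟩
      exact ⟨⟨hx, (hP x).mpr hi.2⟩, rfl⟩
  · intro x hx
    simp only [coe_filter, Set.Finite.mem_toFinset, Set.mem_ofPred_eq] at hx
    simp only [coe_filter, mem_range, Set.mem_ofPred_eq]
    exact ⟨x.mod_lt htpos, (hP x).mp hx.2⟩

theorem finsum_mem_aperySet_filter_eq_sum_aperyElem (hS : IsNumericalSemigroup S) (ht : t ∈ S)
    (htpos : 0 < t) (hP : ∀ x, P x ↔ P (x % t)) :
    ∑ᶠ a ∈ {a ∈ aperySet S t | P a}, a = ∑ i ∈ (range t).filter P, aperyElem S t i := by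
  have hset : {a ∈ aperySet S t | P a} = aperyElem S t '' ↑((range t).filter P) := by
    ext x
    simp only [Set.mem_ofPred_eq, hS.mem_aperySet_iff ht htpos, coe_filter, mem_range,
      Set.mem_image]
    constructor
    · rintro ⟨hx, hPx⟩
      exact ⟨x % t, ⟨x.mod_lt htpos, (hP x).mp hPx⟩, hx.symm⟩
    · rintro ⟨i, ⟨hi, hPi⟩, rfl⟩
      rw [hS.aperyElem_mod hi]
      exact ⟨rfl, (hP _).mpr (by rwa [hS.aperyElem_mod hi])⟩
  rw [hset, finsum_mem_image, finsum_mem_coe_finset]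
  intro i hi j hj hij
  simp only [coe_filter, mem_range, Set.mem_ofPred_eq] at hi hj
  rw [← hS.aperyElem_mod hi.1, ← hS.aperyElem_mod hj.1, hij]

/-- Selmer's formula `σ(Ap(S;t)) = t(t-1)/2 + t·#G(S)`, restricted to a union of residue
classes modulo `t`. -/
theorem finsum_mem_aperySet_filter (hS : IsNumericalSemigroup S) (ht : t ∈ S) (htpos : 0 < t)
    (hP : ∀ x, P x ↔ P (x % t)) :
    ∑ᶠ a ∈ {a ∈ aperySet S t | P a}, a
      = ∑ i ∈ (range t).filter P, i + t * {x ∈ Sᶜ | P x}.ncard := by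
  rw [hS.finsum_mem_aperySet_filter_eq_sum_aperyElem ht htpos hP,
    hS.ncard_compl_filter ht htpos hP, mul_sum, ← sum_add_distrib]
  exact sum_congr rfl fun i hi => hS.aperyElem_eq_add_mul_div (mem_range.mp (mem_filter.mp hi).1)

end IsNumericalSemigroup

/-- For `S` a numerical semigroup and `t` a nonzero even element of `S` with Apéry set
`𝒜 = Ap(S;t)`, we have `O(G(S)) - E(G(S)) = -1/2 + (σ_O(𝒜) - σ_E(𝒜))/t`, i.e.
`2t(O(G(S)) - E(G(S))) = -t + 2(σ_O(𝒜) - σ_E(𝒜))`. -/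
theorem parity_difference_even (S : Set ℕ) (hS : IsNumericalSemigroup S)
    (t : ℕ) (ht : t ∈ S) (ht0 : t ≠ 0) (hteven : Even t) :
    2 * (t : ℤ) * ((countOdd Sᶜ : ℤ) - (countEven Sᶜ : ℤ))
      = -(t : ℤ) + 2 * ((sumOdd (aperySet S t) : ℤ) - (sumEven (aperySet S t) : ℤ)) := by
  have htpos := Nat.pos_of_ne_zero ht0
  have hodd := hS.finsum_mem_aperySet_filter ht htpos (Nat.odd_iff_odd_mod_of_even hteven)
  have heven := hS.finsum_mem_aperySet_filter ht htpos (Nat.even_iff_even_mod_of_even hteven)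
  have hresidues := congrArg (Nat.cast : ℕ → ℤ) (two_mul_sum_range_filter_odd hteven)
  unfold countOdd countEven sumOdd sumEven
  rw [hodd, heven]
  push_cast at hresidues ⊢
  linear_combination -hresidues
end

section
/- Let T = (t_0, …, t_k) be a telescopic sequence of positive integers with gcd(T) = 1, let c(T) = (c_1, …, c_k), and let S = ⟨T⟩ be the free numerical semigroup generated by T. Then the Apéry set of S relative to t_0 equals the set of all sums n_1 t_1 + n_2 t_2 + ⋯ + n_k t_k where each n_i ranges over the integers with 0 ≤ n_i < c_i. -/
/-- The monoid `⟨t_0, …, t_{n-1}⟩` of all nonnegative integer linear combinations of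
the first `n` terms of the sequence `t`. -/
def genBy (t : ℕ → ℕ) (n : ℕ) : Set ℕ :=
  {s | ∃ x : ℕ → ℕ, s = ∑ i ∈ Finset.range n, x i * t i}

/-- `d_i = gcd(t_0, …, t_i)`. -/
def seqD (t : ℕ → ℕ) (i : ℕ) : ℕ := Finset.gcd (Finset.range (i + 1)) t

/-- `c_j = d_{j-1} / d_j` (for `j ≥ 1`). -/
def seqC (t : ℕ → ℕ) (j : ℕ) : ℕ := seqD t (j - 1) / seqD t j

/-- The sequence `(t_0, …, t_k)` of positive integers is telescopic if
`c_j · t_j ∈ ⟨t_0, …, t_{j-1}⟩` for every `j = 1, …, k`. -/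
def IsTelescopic (t : ℕ → ℕ) (k : ℕ) : Prop :=
  (∀ i ≤ k, 0 < t i) ∧ ∀ j, 1 ≤ j → j ≤ k → seqC t j * t j ∈ genBy t j

lemma seqD_succ (t : ℕ → ℕ) (j : ℕ) : seqD t (j+1) = Nat.gcd (t (j+1)) (seqD t j) := by
  rw [seqD, seqD, Finset.range_add_one, Finset.gcd_insert]; rfl

lemma seqD_dvd (t : ℕ → ℕ) {i j : ℕ} (h : i ≤ j) : seqD t j ∣ t i :=
  Finset.gcd_dvd (Finset.mem_range.2 (by omega))

lemma seqD_pos (t : ℕ → ℕ) (ht : 0 < t 0) (i : ℕ) : 0 < seqD t i := by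
  rcases Nat.eq_zero_or_pos (seqD t i) with h | h
  · rw [seqD, Finset.gcd_eq_zero_iff] at h
    exact absurd (h 0 (Finset.mem_range.2 (Nat.succ_pos i))) (by omega)
  · exact h

lemma seqD_succ_dvd (t : ℕ → ℕ) (j : ℕ) : seqD t (j+1) ∣ seqD t j := by
  rw [seqD_succ]; exact Nat.gcd_dvd_right _ _

lemma seqC_mul (t : ℕ → ℕ) (j : ℕ) : seqC t (j+1) * seqD t (j+1) = seqD t j := by
  have : seqC t (j+1) = seqD t j / seqD t (j+1) := by simp [seqC]
  rw [this, Nat.div_mul_cancel (seqD_succ_dvd t j)]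

lemma seqC_pos (t : ℕ → ℕ) (ht : 0 < t 0) (j : ℕ) : 0 < seqC t (j+1) := by
  have h := seqC_mul t j
  have := seqD_pos t ht j
  rcases Nat.eq_zero_or_pos (seqC t (j+1)) with h0 | h0
  · rw [h0, zero_mul] at h; omega
  · exact h0

/-- uniqueness of bounded representations -/
lemma uniq (t : ℕ → ℕ) (ht : 0 < t 0) :
    ∀ j (n m : ℕ → ℕ) (n0 m0 : ℕ),
      (∀ i, 1 ≤ i → i ≤ j → n i < seqC t i) →
      (∀ i, 1 ≤ i → i ≤ j → m i < seqC t i) →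
      n0 * t 0 + ∑ i ∈ Finset.Icc 1 j, n i * t i
        = m0 * t 0 + ∑ i ∈ Finset.Icc 1 j, m i * t i →
      n0 = m0 ∧ ∀ i, 1 ≤ i → i ≤ j → n i = m i := by
  intro j
  induction j with
  | zero =>
    intro n m n0 m0 _ _ heq
    rw [show Finset.Icc 1 0 = ∅ from Finset.Icc_eq_empty (by omega)] at heq
    simp only [Finset.sum_empty, add_zero] at heq
    exact ⟨Nat.eq_of_mul_eq_mul_right ht heq, fun i h1 h2 => by omega⟩
  | succ j ih =>
    intro n m n0 m0 hn hm heq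
    rw [Finset.sum_Icc_succ_top (by omega : 1 ≤ j+1), Finset.sum_Icc_succ_top (by omega : 1 ≤ j+1)] at heq
    -- show n (j+1) = m (j+1)
    set d' := seqD t (j+1) with hd'
    set c := seqC t (j+1) with hc
    have hd'pos : 0 < d' := seqD_pos t ht _
    have hcd : c * d' = seqD t j := seqC_mul t j
    have hdvdt : d' ∣ t (j+1) := seqD_dvd t (le_refl _)
    have hcop : Nat.Coprime c (t (j+1) / d') := by
      have hg : Nat.gcd (seqD t j) (t (j+1)) = d' := by
        rw [hd', seqD_succ, Nat.gcd_comm]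
      have := Nat.coprime_div_gcd_div_gcd (m := seqD t j) (n := t (j+1)) (by rw [hg]; exact hd'pos)
      rw [hg] at this
      have hcval : seqD t j / d' = c := by
        rw [← hcd, Nat.mul_div_cancel _ hd'pos]
      rwa [hcval] at this
    have hz : (n0:ℤ) * t 0 + (∑ i ∈ Finset.Icc 1 j, (n i : ℤ) * t i) + (n (j+1):ℤ) * t (j+1)
        = (m0:ℤ) * t 0 + (∑ i ∈ Finset.Icc 1 j, (m i : ℤ) * t i) + (m (j+1):ℤ) * t (j+1) := by
      have := congrArg (Nat.cast : ℕ → ℤ) heq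
      push_cast at this
      linarith
    have hdvd : (seqD t j : ℤ) ∣ ((n (j+1):ℤ) - m (j+1)) * t (j+1) := by
      have hrw : ((n (j+1):ℤ) - m (j+1)) * t (j+1)
          = ((m0:ℤ) - n0) * t 0 + ∑ i ∈ Finset.Icc 1 j, ((m i:ℤ) - n i) * t i := by
        simp only [sub_mul, Finset.sum_sub_distrib]
        linarith
      rw [hrw]
      refine dvd_add (Dvd.dvd.mul_left ?_ _) (Finset.dvd_sum fun i hi => Dvd.dvd.mul_left ?_ _)
      · exact Int.natCast_dvd_natCast.2 (seqD_dvd t (Nat.zero_le j))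
      · exact Int.natCast_dvd_natCast.2 (seqD_dvd t (Finset.mem_Icc.1 hi).2)
    have htop : n (j+1) = m (j+1) := by
      rw [← hcd] at hdvd
      have ht' : (t (j+1) : ℤ) = (d' : ℤ) * ((t (j+1) / d' : ℕ) : ℤ) := by
        rw [← Nat.cast_mul, Nat.mul_div_cancel' hdvdt]
      rw [ht'] at hdvd
      have hdvd2 : (c : ℤ) ∣ ((n (j+1):ℤ) - m (j+1)) * ((t (j+1) / d' : ℕ) : ℤ) := by
        have : ((c:ℤ) * d') ∣ (((n (j+1):ℤ) - m (j+1)) * ((t (j+1) / d' : ℕ) : ℤ)) * d' := by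
          push_cast at hdvd ⊢
          convert hdvd using 1
          ring
        exact (mul_dvd_mul_iff_right (by exact_mod_cast hd'pos.ne' : (d':ℤ) ≠ 0)).1 this
      have hcopz : IsCoprime (c : ℤ) ((t (j+1) / d' : ℕ) : ℤ) :=
        Nat.isCoprime_iff_coprime.2 hcop
      have hdvd3 : (c : ℤ) ∣ ((n (j+1):ℤ) - m (j+1)) :=
        hcopz.dvd_of_dvd_mul_right hdvd2
      have hb1 := hn (j+1) (by omega) (le_refl _)
      have hb2 := hm (j+1) (by omega) (le_refl _)
      have := Int.eq_zero_of_dvd_of_natAbs_lt_natAbs hdvd3 (by omega)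
      omega
    rw [htop] at heq
    have heq' : n0 * t 0 + ∑ i ∈ Finset.Icc 1 j, n i * t i
        = m0 * t 0 + ∑ i ∈ Finset.Icc 1 j, m i * t i := by omega
    obtain ⟨h1, h2⟩ := ih n m n0 m0 (fun i h1 h2 => hn i h1 (by omega))
      (fun i h1 h2 => hm i h1 (by omega)) heq'
    exact ⟨h1, fun i hi1 hi2 => by
      rcases Nat.lt_or_ge i (j+1) with h | h
      · exact h2 i hi1 (by omega)
      · have : i = j+1 := by omega
        rw [this]; exact htop⟩

lemma mem_genBy (t : ℕ → ℕ) (k : ℕ) (n0 : ℕ) (n : ℕ → ℕ) :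
    n0 * t 0 + ∑ i ∈ Finset.Icc 1 k, n i * t i ∈ genBy t (k+1) := by
  refine ⟨fun i => if i = 0 then n0 else n i, ?_⟩
  have hset : Finset.range (k+1) = insert 0 (Finset.Icc 1 k) := by
    ext i; simp only [Finset.mem_range, Finset.mem_insert, Finset.mem_Icc]; omega
  rw [hset, Finset.sum_insert (by simp)]
  simp only [if_pos rfl]
  congr 1
  apply Finset.sum_congr rfl
  intro i hi
  rw [if_neg (by have := (Finset.mem_Icc.1 hi).1; omega)]

lemma exists_rep (t : ℕ → ℕ) (k : ℕ) (htel : IsTelescopic t k) :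
    ∀ j, j ≤ k → ∀ s ∈ genBy t (j+1),
      ∃ (n0 : ℕ) (n : ℕ → ℕ), (∀ i, 1 ≤ i → i ≤ j → n i < seqC t i) ∧
        s = n0 * t 0 + ∑ i ∈ Finset.Icc 1 j, n i * t i := by
  intro j
  induction j with
  | zero =>
    rintro _ s ⟨x, rfl⟩
    exact ⟨x 0, 0, fun i h1 h2 => by omega, by simp⟩
  | succ j ih =>
    rintro hjk s ⟨x, rfl⟩
    have ht0 : 0 < t 0 := htel.1 0 (Nat.zero_le k)
    set c := seqC t (j+1) with hc
    have hcpos : 0 < c := seqC_pos t ht0 j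
    obtain ⟨y, hy⟩ := htel.2 (j+1) (by omega) hjk
    rw [Finset.sum_range_succ]
    have hx : x (j+1) * t (j+1)
        = (x (j+1) / c) * (c * t (j+1)) + (x (j+1) % c) * t (j+1) := by
      conv_lhs => rw [← Nat.div_add_mod (x (j+1)) c]
      ring
    set q := x (j+1) / c with hq
    set r := x (j+1) % c with hr
    have hmem : (∑ i ∈ Finset.range (j+1), x i * t i) + q * (c * t (j+1))
        ∈ genBy t (j+1) := by
      refine ⟨fun i => x i + q * y i, ?_⟩
      rw [hy, Finset.mul_sum, ← Finset.sum_add_distrib]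
      apply Finset.sum_congr rfl; intro i _; ring
    obtain ⟨n0, n, hb, hrep⟩ := ih (by omega) _ hmem
    refine ⟨n0, fun i => if i = j+1 then r else n i, ?_, ?_⟩
    · intro i h1 h2
      dsimp only
      by_cases hij : i = j+1
      · subst hij; simpa using Nat.mod_lt _ hcpos
      · rw [if_neg hij]; exact hb i h1 (by omega)
    · dsimp only
      rw [Finset.sum_Icc_succ_top (by omega : 1 ≤ j+1), if_pos rfl]
      have hsum : ∑ i ∈ Finset.Icc 1 j, (if i = j+1 then r else n i) * t i
          = ∑ i ∈ Finset.Icc 1 j, n i * t i := by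
        apply Finset.sum_congr rfl; intro i hi
        rw [if_neg (by have := (Finset.mem_Icc.1 hi).2; omega)]
      rw [hsum]
      linarith [hrep, hx]

/-- For `S` the free numerical semigroup generated by a telescopic sequence
`T = (t_0, …, t_k)` with `gcd T = 1`, the Apéry set of `S` relative to `t_0` is the set
of all sums `n_1 t_1 + ⋯ + n_k t_k` with `0 ≤ n_i < c_i` for each `i`. -/
theorem apery_of_free (t : ℕ → ℕ) (k : ℕ) (htel : IsTelescopic t k)
    (hgcd : seqD t k = 1) :
    aperySet (genBy t (k + 1)) (t 0)
      = {s | ∃ n : ℕ → ℕ, (∀ i, 1 ≤ i → i ≤ k → n i < seqC t i) ∧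
          s = ∑ i ∈ Finset.Icc 1 k, n i * t i} := by
  have ht0 : 0 < t 0 := htel.1 0 (Nat.zero_le k)
  ext s
  simp only [aperySet, Set.mem_setOf_eq, Set.mem_sep_iff]
  constructor
  · rintro ⟨hs, hnap⟩
    obtain ⟨n0, n, hb, hrep⟩ := exists_rep t k htel k le_rfl s hs
    rcases Nat.eq_zero_or_pos n0 with h0 | h0
    · exact ⟨n, hb, by rw [hrep, h0, zero_mul, zero_add]⟩
    · exfalso
      apply hnap
      obtain ⟨n0', rfl⟩ : ∃ n0', n0 = n0' + 1 := ⟨n0 - 1, by omega⟩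
      refine ⟨n0' * t 0 + ∑ i ∈ Finset.Icc 1 k, n i * t i, mem_genBy t k _ n, ?_⟩
      rw [hrep]; ring
  · rintro ⟨n, hb, rfl⟩
    constructor
    · have := mem_genBy t k 0 n
      simpa using this
    · rintro ⟨u, hu, hequ⟩
      obtain ⟨m0, m, hbm, hrepm⟩ := exists_rep t k htel k le_rfl u hu
      have heq : 0 * t 0 + ∑ i ∈ Finset.Icc 1 k, n i * t i
          = (m0 + 1) * t 0 + ∑ i ∈ Finset.Icc 1 k, m i * t i := by
        rw [zero_mul, zero_add, hequ, hrepm]; ring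
      obtain ⟨h1, -⟩ := uniq t ht0 k n m 0 (m0 + 1) hb hbm heq
      omega
end

section
/- Let (A, B) be a suitable pair of sequences of positive integers, A = (a_1, …, a_p), B = (b_1, …, b_p), with compound sequence C(A,B) = (n_0, …, n_p). Then gcd(n_0, …, n_p) = 1, so ⟨n_0, …, n_p⟩ is a numerical semigroup. If moreover a_i ≥ 2 and b_i ≥ 2 for all i, then (n_0, …, n_p) is a minimal generating sequence for this numerical semigroup (no proper subsequence generates it). -/
/-- The monoid of all nonnegative integer linear combinations of the terms `t i`
for `i` ranging over the finite index set `J` (a "subsequence"). -/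
def genByIdx (t : ℕ → ℕ) (J : Finset ℕ) : Set ℕ :=
  {s | ∃ x : ℕ → ℕ, s = ∑ i ∈ J, x i * t i}

/-- `(A, B)` (with terms indexed `1, …, p`) is a suitable pair of sequences of positive
integers: `gcd (A i) (B j) = 1` for all `j ≤ i`. -/
def IsSuitablePair (A B : ℕ → ℕ) (p : ℕ) : Prop :=
  (∀ i, 1 ≤ i → i ≤ p → 0 < A i ∧ 0 < B i) ∧
    ∀ i j, 1 ≤ j → j ≤ i → i ≤ p → Nat.gcd (A i) (B j) = 1

/-- The compound sequence `C(A,B) = (n_0, …, n_p)`: `n_i = b_1 ⋯ b_i · a_{i+1} ⋯ a_p`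
(equivalently `n_0 = a_1 ⋯ a_p` and `n_i = n_{i-1} b_i / a_i`). -/
def compoundSeq (A B : ℕ → ℕ) (p : ℕ) (i : ℕ) : ℕ :=
  (∏ j ∈ Finset.Icc 1 i, B j) * ∏ j ∈ Finset.Icc (i + 1) p, A j

open Finset

section genBy

variable {t : ℕ → ℕ} {n : ℕ}

lemma zero_mem_genBy : 0 ∈ genBy t n :=
  ⟨0, by simp⟩

lemma add_mem_genBy {a b : ℕ} (ha : a ∈ genBy t n) (hb : b ∈ genBy t n) :
    a + b ∈ genBy t n := by
  obtain ⟨x, rfl⟩ := ha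
  obtain ⟨y, rfl⟩ := hb
  exact ⟨x + y, by simp only [Pi.add_apply, add_mul, sum_add_distrib]⟩

lemma apply_mem_genBy {i : ℕ} (hi : i < n) : t i ∈ genBy t n :=
  ⟨Pi.single i 1, by simp [Pi.single_apply, hi]⟩

lemma closure_subset_genBy : (AddSubmonoid.closure (t '' range n) : Set ℕ) ⊆ genBy t n := by
  intro m hm
  induction hm using AddSubmonoid.closure_induction with
  | mem _ hm =>
    obtain ⟨i, hi, rfl⟩ := hm
    exact apply_mem_genBy (mem_range.mp hi)
  | zero => exact zero_mem_genBy
  | add _ _ _ _ ha hb => exact add_mem_genBy ha hb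

lemma finite_compl_genBy (h : (range n).gcd t = 1) : (genBy t n)ᶜ.Finite := by
  have hgcd : Nat.setGcd (t '' range n) = 1 :=
    Nat.dvd_one.mp (h ▸ dvd_gcd fun i hi => Nat.setGcd_dvd_of_mem ⟨i, hi, rfl⟩)
  obtain ⟨N, hN⟩ := Nat.exists_mem_closure_of_ge (t '' range n)
  exact (Set.finite_Iio N).subset fun m hm => lt_of_not_ge fun hNm =>
    hm (closure_subset_genBy (hN m hNm (hgcd ▸ one_dvd m)))

lemma isNumericalSemigroup_genBy (h : (range n).gcd t = 1) :
    IsNumericalSemigroup (genBy t n) :=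
  ⟨zero_mem_genBy, fun _ ha _ hb => add_mem_genBy ha hb, finite_compl_genBy h⟩

end genBy

lemma eq_zero_of_mul_eq_add_of_dvd {P Q N L R : ℕ} (h : Q * P = L + R) (hL : P ∣ L)
    (hR : N ∣ R) (hPN : P.Coprime N) (hQN : Q < N) : R = 0 := by
  have hPR : P ∣ R := (Nat.dvd_add_right hL).mp (h ▸ dvd_mul_left P Q)
  rcases P.eq_zero_or_pos with rfl | hP
  · exact Nat.eq_zero_of_zero_dvd hPR
  refine Nat.eq_zero_of_dvd_of_lt (hPN.mul_dvd_of_dvd_of_dvd hPR hR) ?_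
  calc R ≤ Q * P := by omega
    _ < P * N := by nlinarith

section compoundSeq

variable {A B : ℕ → ℕ} {p : ℕ}

lemma prod_Icc_dvd_compoundSeq_of_lt {i k : ℕ} (hik : i < k) :
    ∏ j ∈ Icc k p, A j ∣ compoundSeq A B p i :=
  (prod_dvd_prod_of_subset _ _ _ (Icc_subset_Icc_left hik)).mul_left _

lemma prod_Icc_dvd_compoundSeq_of_gt {i k : ℕ} (hki : k < i) :
    ∏ j ∈ Icc 1 (k + 1), B j ∣ compoundSeq A B p i :=
  (prod_dvd_prod_of_subset _ _ _ (Icc_subset_Icc_right hki)).mul_right _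

namespace IsSuitablePair

lemma coprime_prod (h : IsSuitablePair A B p) {i j : ℕ} (hji : j ≤ i) :
    Nat.Coprime (∏ m ∈ Icc 1 j, B m) (∏ l ∈ Icc i p, A l) :=
  Nat.Coprime.prod_left fun m hm => Nat.Coprime.prod_right fun l hl =>
    Nat.Coprime.symm (h.2 l m (mem_Icc.mp hm).1
      ((mem_Icc.mp hm).2.trans (hji.trans (mem_Icc.mp hl).1)) (mem_Icc.mp hl).2)

lemma gcd_range_compoundSeq (h : IsSuitablePair A B p) {i : ℕ} (hi : i ≤ p) :
    (range (i + 1)).gcd (compoundSeq A B p) = ∏ j ∈ Icc (i + 1) p, A j := by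
  induction i with
  | zero => simp [compoundSeq]
  | succ i ih =>
    rw [range_add_one, gcd_insert, ih (by omega)]
    change Nat.gcd ((∏ j ∈ Icc 1 (i + 1), B j) * ∏ j ∈ Icc (i + 2) p, A j) _ = _
    rw [(h.coprime_prod le_rfl).gcd_mul_left_cancel,
      Nat.gcd_eq_left (prod_dvd_prod_of_subset _ _ _ (Icc_subset_Icc_left (by omega)))]

lemma prod_B_pos (h : IsSuitablePair A B p) {k : ℕ} (hk : k ≤ p) :
    0 < ∏ j ∈ Icc 1 k, B j :=
  prod_pos fun j hj => (h.1 j (mem_Icc.mp hj).1 ((mem_Icc.mp hj).2.trans hk)).2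

lemma prod_A_pos (h : IsSuitablePair A B p) (k : ℕ) : 0 < ∏ j ∈ Icc (k + 1) p, A j :=
  prod_pos fun j hj => (h.1 j (by have := (mem_Icc.mp hj).1; omega) (mem_Icc.mp hj).2).1

lemma prod_Icc_not_dvd_compoundSeq (h : IsSuitablePair A B p) {k : ℕ} (hk : k ≤ p)
    (hAk : 2 ≤ A k) : ¬∏ j ∈ Icc k p, A j ∣ compoundSeq A B p k := by
  intro hdvd
  have hAP : ∏ j ∈ Icc k p, A j ∣ ∏ j ∈ Icc (k + 1) p, A j :=
    (h.coprime_prod le_rfl).symm.dvd_of_dvd_mul_left hdvd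
  rw [← mul_prod_Ioc_eq_prod_Icc hk, ← Icc_add_one_left_eq_Ioc] at hAP
  have := (mul_le_iff_le_one_left (h.prod_A_pos k)).mp (Nat.le_of_dvd (h.prod_A_pos k) hAP)
  omega

lemma compoundSeq_notMem_genByIdx (h : IsSuitablePair A B p)
    (hge : ∀ i, 1 ≤ i → i ≤ p → 2 ≤ A i ∧ 2 ≤ B i) {J : Finset ℕ} (hJ : J ⊆ range (p + 1))
    {k : ℕ} (hkJ : k ∉ J) (hk : k ≤ p) :
    compoundSeq A B p k ∉ genByIdx (compoundSeq A B p) J := by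
  rintro ⟨x, hx⟩
  rw [← sum_filter_add_sum_filter_not J (· < k)] at hx
  set L := ∑ i ∈ J with i < k, x i * compoundSeq A B p i
  set R := ∑ i ∈ J with ¬i < k, x i * compoundSeq A B p i
  have hgt : ∀ i ∈ J.filter (¬· < k), k < i := fun i hi => by
    rw [mem_filter] at hi
    have : i ≠ k := fun hik => hkJ (hik ▸ hi.1)
    omega
  have hL : ∏ j ∈ Icc k p, A j ∣ L :=
    dvd_sum fun i hi => (prod_Icc_dvd_compoundSeq_of_lt (mem_filter.mp hi).2).mul_left _
  have hR : R = 0 := by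
    rcases lt_or_ge k p with hkp | hkp
    · refine eq_zero_of_mul_eq_add_of_dvd hx
        ((prod_dvd_prod_of_subset _ _ _ (Icc_subset_Icc_left k.le_succ)).trans hL)
        (dvd_sum fun i hi => (prod_Icc_dvd_compoundSeq_of_gt (hgt i hi)).mul_left _)
        (h.coprime_prod le_rfl).symm ?_
      rw [prod_Icc_succ_top (by omega)]
      exact lt_mul_right (h.prod_B_pos hk) (hge (k + 1) (by omega) hkp).2
    · exact sum_eq_zero fun i hi =>
        absurd (mem_range.mp (hJ (mem_filter.mp hi).1)) (by have := hgt i hi; omega)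
  rcases Nat.eq_zero_or_pos k with rfl | hk1
  · have hL0 : L = 0 := sum_eq_zero fun i hi => absurd (mem_filter.mp hi).2 i.not_lt_zero
    exact (Nat.mul_pos (h.prod_B_pos hk) (h.prod_A_pos 0)).ne' (hx.trans (by rw [hL0, hR]))
  exact h.prod_Icc_not_dvd_compoundSeq hk (hge k hk1 hk).1 (hx ▸ hR ▸ hL)

end IsSuitablePair

end compoundSeq

/-- For `(A, B)` a suitable pair with compound sequence `C(A,B) = (n_0, …, n_p)`:
`gcd(n_0, …, n_p) = 1`, so `⟨n_0, …, n_p⟩` is a numerical semigroup; and if moreover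
`a_i ≥ 2` and `b_i ≥ 2` for all `i`, then `(n_0, …, n_p)` is a minimal generating
sequence (no proper subsequence generates the semigroup). -/
theorem compound_gcd_and_minimal (A B : ℕ → ℕ) (p : ℕ)
    (hsuit : IsSuitablePair A B p) :
    Finset.gcd (Finset.range (p + 1)) (compoundSeq A B p) = 1 ∧
      IsNumericalSemigroup (genBy (compoundSeq A B p) (p + 1)) ∧
      ((∀ i, 1 ≤ i → i ≤ p → 2 ≤ A i ∧ 2 ≤ B i) →
        ∀ J : Finset ℕ, J ⊂ Finset.range (p + 1) →
          genByIdx (compoundSeq A B p) J ≠ genBy (compoundSeq A B p) (p + 1)) := by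
  have hgcd : (range (p + 1)).gcd (compoundSeq A B p) = 1 := by
    simpa using hsuit.gcd_range_compoundSeq le_rfl
  refine ⟨hgcd, isNumericalSemigroup_genBy hgcd, fun hge J hJ heq => ?_⟩
  obtain ⟨k, hk, hkJ⟩ := exists_of_ssubset hJ
  exact hsuit.compoundSeq_notMem_genByIdx hge hJ.subset hkJ (Nat.lt_succ_iff.mp (mem_range.mp hk))
    (heq ▸ apply_mem_genBy (mem_range.mp hk))
end
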